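/- Let b, c, e be real numbers with b ≠ 1, c ≠ 1 and e > 0, and let 0 < z < 1/2. Then Σ_{k=0}^∞ (b)_k(c)_k/((k+1)!·(e)_k)·(z/(z−1))^k = (1−z)^b·((c−e)/(c−1))·Σ_{k=0}^∞ (b)_k(e−c+1)_k z^k/((k+1)!·(e)_k) + (e−1)(1−z)(1−(1−z)^{b−1})/((c−1)(b−1)z). (This is the relation ₃F₂(1,b,c; 2,e; z/(z−1)) = (1−z)^b((c−e)/(c−1))·₃F₂(1,b,e−c+1; 2,e; z) + (e−1)(1−z)(1−(1−z)^{b−1})/((c−1)(b−1)z).) -/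

import Mathlib

/-
Shifting the summation index identifies the series on the left with
`(₂F₁(b-1, c-1; e-1; w) - 1) (e-1) / ((b-1)(c-1) w)` (with `₂F₁(b, c; 2; w)` itself when `e = 1`),
and likewise on the right, so the claim is Pfaff's transformation
`₂F₁(a, b; c; z/(z-1)) = (1-z)^a ₂F₁(a, c-b; c; z)` rearranged.
For Pfaff's transformation write `(z/(z-1))^k (1-z)^(-a) = (-z)^k (1-z)^(-a-k)` and expand the
last factor by the binomial series. For `|z| < 1/2` the resulting double series converges
absolutely, and summing it along the diagonals `k + m = n` produces the coefficients of
`₂F₁(a, c-b; c; z)`, by the Chu–Vandermonde identity.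
-/

open Real

/-- Rising factorial (Pochhammer symbol) `(a)_k`. -/
noncomputable def poch (a : ℝ) (k : ℕ) : ℝ := (ascPochhammer ℝ k).eval a

open Finset
open scoped Nat

lemma poch_zero (a : ℝ) : poch a 0 = 1 := by simp [poch]

lemma poch_succ (a : ℝ) (k : ℕ) : poch a (k + 1) = poch a k * (a + k) :=
  ascPochhammer_succ_eval k a

lemma poch_succ_left (a : ℝ) (k : ℕ) : poch a (k + 1) = a * poch (a + 1) k := by
  simp [poch, ascPochhammer_succ_left, Polynomial.eval_comp]

lemma poch_add (a : ℝ) (k m : ℕ) : poch a (k + m) = poch a k * poch (a + k) m := by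
  simp [poch, ← ascPochhammer_mul, Polynomial.eval_comp]

lemma poch_ne_zero {a : ℝ} (ha : ∀ n : ℕ, (n : ℝ) ≠ -a) (k : ℕ) : poch a k ≠ 0 := by
  rw [poch, Ne, ascPochhammer_eval_eq_zero_iff]
  rintro ⟨n, -, hn⟩
  exact ha n hn

lemma abs_poch_le {a b : ℝ} (hab : |a| ≤ b) (k : ℕ) : |poch a k| ≤ poch b k := by
  induction k with
  | zero => simp [poch_zero]
  | succ k ih =>
    rw [poch_succ, poch_succ, abs_mul]
    gcongr
    · exact (abs_nonneg _).trans ih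
    · exact (abs_add_le _ _).trans (by simpa using hab)

lemma poch_nonneg {a : ℝ} (ha : 0 ≤ a) (k : ℕ) : 0 ≤ poch a k :=
  (abs_nonneg _).trans (abs_poch_le (abs_of_nonneg ha).le k)

lemma poch_one (k : ℕ) : poch 1 k = k ! := ascPochhammer_eval_one ℝ k

lemma poch_two (k : ℕ) : poch 2 k = (k + 1)! := by
  rw [← poch_one, poch_succ_left, one_mul, one_add_one_eq_two]

lemma multichoose_eq_poch_div (a : ℝ) (n : ℕ) : Ring.multichoose a n = poch a n / n ! := by
  rw [eq_div_iff (by positivity), mul_comm, ← nsmul_eq_mul,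
    Ring.factorial_nsmul_multichoose_eq_ascPochhammer, Polynomial.ascPochhammer_smeval_eq_eval,
    poch]

lemma abs_multichoose_le {a b : ℝ} (hab : |a| ≤ b) (k : ℕ) :
    |Ring.multichoose a k| ≤ Ring.multichoose b k := by
  rw [multichoose_eq_poch_div, multichoose_eq_poch_div, abs_div, Nat.abs_cast]
  gcongr
  exact abs_poch_le hab k

theorem hasSum_multichoose_mul_pow (a : ℝ) {x : ℝ} (hx : |x| < 1) :
    HasSum (fun n => Ring.multichoose a n * x ^ n) ((1 - x) ^ (-a)) := by
  have h := (one_div_one_sub_rpow_hasFPowerSeriesOnBall_zero a).hasSum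
    (y := x) (by simpa [enorm_eq_nnnorm, ← NNReal.coe_lt_one] using hx)
  have hx1 : 0 ≤ 1 - x := by linarith [le_abs_self x]
  simpa [FormalMultilinearSeries.ofScalars_apply_eq, Ring.multichoose_eq, rpow_neg hx1,
    mul_comm] using h

theorem sum_antidiagonal_neg_one_pow_mul_multichoose (b g : ℝ) (n : ℕ) :
    ∑ km ∈ antidiagonal n, (-1) ^ km.1 * Ring.multichoose b km.1 *
      Ring.multichoose (g + km.1) km.2 = Ring.multichoose (g - b) n := by
  rw [Ring.multichoose_eq, show g - b + n - 1 = -b + (g + n - 1) by ring,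
    Ring.add_choose_eq n (Commute.all _ _)]
  refine sum_congr rfl fun km hkm => ?_
  rw [HasAntidiagonal.mem_antidiagonal] at hkm
  rw [Ring.choose_neg', Ring.multichoose_eq (g + _), ← hkm, Units.smul_def, zsmul_eq_mul,
    Int.cast_negOnePow_natCast, Nat.cast_add, add_assoc]

theorem HasSum.sum_antidiagonal {α A : Type*} [AddCommMonoid α] [TopologicalSpace α]
    [ContinuousAdd α] [RegularSpace α] [AddCommMonoid A] [HasAntidiagonal A] {f : A × A → α}
    {a : α} (h : HasSum f a) : HasSum (fun n => ∑ kl ∈ antidiagonal n, f kl) a :=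
  (HasAntidiagonal.sigmaAntidiagonalEquivProd.hasSum_iff.2 h).sigma fun n =>
    (antidiagonal n).hasSum f

theorem one_le_ordinaryHypergeometricSeries_radius {𝕂 : Type*} (𝔸 : Type*) [RCLike 𝕂]
    [NormedDivisionRing 𝔸] [NormedAlgebra 𝕂 𝔸] (a b : 𝕂) {c : 𝕂}
    (hc : ∀ n : ℕ, (n : 𝕂) ≠ -c) : 1 ≤ (ordinaryHypergeometricSeries 𝔸 a b c).radius := by
  by_cases ha : ∃ k : ℕ, (k : 𝕂) = -a
  · obtain ⟨k, hk⟩ := ha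
    rw [neg_eq_iff_eq_neg.mp hk.symm, ordinaryHypergeometric_radius_top_of_neg_nat₁]
    exact le_top
  by_cases hb : ∃ k : ℕ, (k : 𝕂) = -b
  · obtain ⟨k, hk⟩ := hb
    rw [neg_eq_iff_eq_neg.mp hk.symm, ordinaryHypergeometric_radius_top_of_neg_nat₂]
    exact le_top
  push Not at ha hb
  rw [ordinaryHypergeometricSeries_radius_eq_one 𝔸 a b c fun n => ⟨ha n, hb n, hc n⟩]

lemma mem_eball_ordinaryHypergeometricSeries_radius (a b : ℝ) {c : ℝ}
    (hc : ∀ n : ℕ, (n : ℝ) ≠ -c) {x : ℝ} (hx : |x| < 1) :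
    x ∈ Metric.eball 0 (ordinaryHypergeometricSeries ℝ a b c).radius := by
  refine Metric.mem_eball.2
    (lt_of_lt_of_le ?_ (one_le_ordinaryHypergeometricSeries_radius ℝ a b hc))
  simpa [edist_zero_right, enorm_eq_nnnorm, ← NNReal.coe_lt_one] using hx

theorem hasSum_ordinaryHypergeometric (a b : ℝ) {c : ℝ} (hc : ∀ n : ℕ, (n : ℝ) ≠ -c) {x : ℝ}
    (hx : |x| < 1) :
    HasSum (fun n => ordinaryHypergeometricCoefficient a b c n * x ^ n) (₂F₁ a b c x) := by
  have h := (ordinaryHypergeometricSeries ℝ a b c).hasSum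
    (mem_eball_ordinaryHypergeometricSeries_radius a b hc hx)
  simp only [ordinaryHypergeometricSeries_apply_eq, smul_eq_mul] at h
  exact h

theorem summable_abs_ordinaryHypergeometric (a b : ℝ) {c : ℝ} (hc : ∀ n : ℕ, (n : ℝ) ≠ -c)
    {x : ℝ} (hx : |x| < 1) :
    Summable fun n => |ordinaryHypergeometricCoefficient a b c n * x ^ n| := by
  have h := (ordinaryHypergeometricSeries ℝ a b c).summable_norm_apply
    (mem_eball_ordinaryHypergeometricSeries_radius a b hc hx)
  simp only [ordinaryHypergeometricSeries_apply_eq, smul_eq_mul, Real.norm_eq_abs] at h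
  exact h

lemma ordinaryHypergeometricCoefficient_eq (a b c : ℝ) (n : ℕ) :
    ordinaryHypergeometricCoefficient a b c n = poch a n * poch b n / (poch c n * n !) := by
  rw [div_eq_mul_inv, mul_inv]
  simp only [poch]
  ring

lemma ordinaryHypergeometric_eq_tsum_poch (a b c x : ℝ) :
    ₂F₁ a b c x = ∑' n : ℕ, poch a n * poch b n / (poch c n * n !) * x ^ n := by
  rw [ordinaryHypergeometric_eq_tsum]
  exact tsum_congr fun n => by rw [smul_eq_mul, ← ordinaryHypergeometricCoefficient_eq]

lemma pow_mul_rpow_neg_add {y : ℝ} (hy : 0 < y) (u a : ℝ) (k : ℕ) :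
    u ^ k * y ^ (-(a + k)) = (u / y) ^ k * y ^ (-a) := by
  rw [neg_add, rpow_add hy, rpow_neg hy.le (k : ℝ), rpow_natCast, div_pow]
  ring

lemma abs_div_sub_one_lt_one {z : ℝ} (hz : |z| < 1 / 2) : |z / (z - 1)| < 1 := by
  have := le_abs_self z
  rw [abs_div, abs_of_neg (show z - 1 < 0 by linarith), div_lt_one (by linarith)]
  linarith

lemma ordinaryHypergeometricCoefficient_mul_multichoose (a b : ℝ) {c : ℝ}
    (hc : ∀ n : ℕ, (n : ℝ) ≠ -c) (k m : ℕ) :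
    ordinaryHypergeometricCoefficient a b c k * Ring.multichoose (a + k) m =
      poch a (k + m) / poch c (k + m) *
        (Ring.multichoose b k * Ring.multichoose (c + k) m) := by
  have hck : poch (c + k) m ≠ 0 := by
    have := poch_ne_zero hc (k + m)
    rw [poch_add] at this
    exact right_ne_zero_of_mul this
  rw [ordinaryHypergeometricCoefficient_eq, multichoose_eq_poch_div, multichoose_eq_poch_div,
    multichoose_eq_poch_div, poch_add, poch_add]
  field_simp

/- The `(k, m)` term of `₂F₁(a, b; c; z/(z-1)) (1-z)^(-a)` once `(1-z)^(-a-k)` is expanded by the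
binomial series. -/
noncomputable def pfaffDoubleTerm (a b c z : ℝ) (p : ℕ × ℕ) : ℝ :=
  ordinaryHypergeometricCoefficient a b c p.1 * (-z) ^ p.1 *
    (Ring.multichoose (a + p.1) p.2 * z ^ p.2)

lemma hasSum_pfaffDoubleTerm_fiber (a b c : ℝ) {z : ℝ} (hz : |z| < 1) (k : ℕ) :
    HasSum (fun m => pfaffDoubleTerm a b c z (k, m))
      (ordinaryHypergeometricCoefficient a b c k * (z / (z - 1)) ^ k * (1 - z) ^ (-a)) := by
  have h1z : 0 < 1 - z := by linarith [le_abs_self z]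
  rw [mul_assoc, ← neg_div_neg_eq, neg_sub, ← pow_mul_rpow_neg_add h1z, ← mul_assoc]
  exact (hasSum_multichoose_mul_pow (a + k) hz).mul_left _

lemma sum_antidiagonal_pfaffDoubleTerm (a b : ℝ) {c : ℝ} (hc : ∀ n : ℕ, (n : ℝ) ≠ -c) (z : ℝ)
    (n : ℕ) :
    ∑ p ∈ antidiagonal n, pfaffDoubleTerm a b c z p =
      ordinaryHypergeometricCoefficient a (c - b) c n * z ^ n := by
  have hterm : ∀ p ∈ antidiagonal n, pfaffDoubleTerm a b c z p =
      poch a n / poch c n * z ^ n * ((-1) ^ p.1 * Ring.multichoose b p.1 *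
        Ring.multichoose (c + p.1) p.2) := by
    intro p hp
    rw [HasAntidiagonal.mem_antidiagonal] at hp
    rw [pfaffDoubleTerm, mul_mul_mul_comm, ordinaryHypergeometricCoefficient_mul_multichoose a b hc,
      ← hp, pow_add, neg_pow]
    ring
  rw [sum_congr rfl hterm, ← mul_sum, sum_antidiagonal_neg_one_pow_mul_multichoose,
    ordinaryHypergeometricCoefficient_eq, multichoose_eq_poch_div]
  ring

lemma summable_pfaffDoubleTerm (a b : ℝ) {c : ℝ} (hc : ∀ n : ℕ, (n : ℝ) ≠ -c) {z : ℝ}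
    (hz : |z| < 1 / 2) : Summable (pfaffDoubleTerm a b c z) := by
  have h1z : 0 < 1 - |z| := by linarith
  let g : ℕ × ℕ → ℝ := fun p => |ordinaryHypergeometricCoefficient a b c p.1| * |z| ^ p.1 *
    (Ring.multichoose (|a| + p.1) p.2 * |z| ^ p.2)
  have hg_fiber (k : ℕ) : HasSum (fun m => g (k, m))
      (|ordinaryHypergeometricCoefficient a b c k| * |z| ^ k * (1 - |z|) ^ (-(|a| + k))) :=
    (hasSum_multichoose_mul_pow (|a| + k) (by rw [abs_abs]; linarith)).mul_left _
  have hξ : 0 ≤ |z| / (1 - |z|) := by positivity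
  have hξ1 : |(|z| / (1 - |z|))| < 1 := by
    rw [abs_of_nonneg hξ, div_lt_one h1z]
    linarith
  have hg : Summable g := by
    refine (summable_prod_of_nonneg fun p => ?_).2 ⟨fun k => (hg_fiber k).summable, ?_⟩
    · have := poch_nonneg (by positivity : 0 ≤ |a| + p.1) p.2
      simp only [g, Pi.zero_apply, multichoose_eq_poch_div]
      positivity
    · simp_rw [(hg_fiber _).tsum_eq]
      refine ((summable_abs_ordinaryHypergeometric a b hc hξ1).mul_right
        ((1 - |z|) ^ (-|a|))).congr fun k => ?_
      rw [abs_mul (ordinaryHypergeometricCoefficient a b c k), abs_pow, abs_of_nonneg hξ,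
        mul_assoc _ (|z| ^ k), pow_mul_rpow_neg_add h1z, mul_assoc]
  refine Summable.of_norm_bounded hg fun p => ?_
  simp only [Real.norm_eq_abs, pfaffDoubleTerm, g]
  generalize ordinaryHypergeometricCoefficient a b c p.1 = T
  rw [abs_mul, abs_mul, abs_mul, abs_pow, abs_pow, abs_neg]
  gcongr
  exact abs_multichoose_le ((abs_add_le _ _).trans (by simp)) _

theorem ordinaryHypergeometric_pfaff (a b : ℝ) {c : ℝ} (hc : ∀ n : ℕ, (n : ℝ) ≠ -c) {z : ℝ}
    (hz : |z| < 1 / 2) :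
    ₂F₁ a b c (z / (z - 1)) = (1 - z) ^ a * ₂F₁ a (c - b) c z := by
  have h1z : 0 < 1 - z := by linarith [le_abs_self z]
  have hsum := (summable_pfaffDoubleTerm a b hc hz).hasSum
  have hfibers := (hasSum_ordinaryHypergeometric a b hc (abs_div_sub_one_lt_one hz)).mul_right
    ((1 - z) ^ (-a))
  have hdiag := hasSum_ordinaryHypergeometric a (c - b) hc (by linarith : |z| < 1)
  simp_rw [← sum_antidiagonal_pfaffDoubleTerm a b hc] at hdiag
  have h := (hsum.prod_fiberwise (hasSum_pfaffDoubleTerm_fiber a b c (by linarith))).unique hfibers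
  rw [hsum.sum_antidiagonal.unique hdiag, rpow_neg h1z.le] at h
  rw [h]
  field_simp

-- `₃F₂(1, a, b; 2, c; x)`, using `(1)_k / ((2)_k k!) = 1 / (k + 1)!`.
noncomputable def threeF2OneTwo (a b c x : ℝ) : ℝ :=
  ∑' k : ℕ, poch a k * poch b k / ((k + 1)! * poch c k) * x ^ k

theorem ordinaryHypergeometric_eq_one_add (a b : ℝ) {c : ℝ} (hc : ∀ n : ℕ, (n : ℝ) ≠ -c)
    {x : ℝ} (hx : |x| < 1) :
    ₂F₁ a b c x = 1 + a * b / c * x * threeF2OneTwo (a + 1) (b + 1) (c + 1) x := by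
  have h := hasSum_ordinaryHypergeometric a b hc hx
  rw [← h.tsum_eq, h.summable.tsum_eq_zero_add, threeF2OneTwo, ← tsum_mul_left]
  congr 1
  · simp [ordinaryHypergeometricCoefficient_eq, poch_zero]
  refine tsum_congr fun k => ?_
  rw [ordinaryHypergeometricCoefficient_eq, poch_succ_left, poch_succ_left, poch_succ_left,
    pow_succ]
  field_simp

theorem threeF2OneTwo_one (a b x : ℝ) : threeF2OneTwo a b 1 x = ₂F₁ a b 2 x := by
  simp only [threeF2OneTwo, ordinaryHypergeometric_eq_tsum_poch, poch_one, poch_two]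

theorem threeF2OneTwo_transformation {b c e z : ℝ} (hb : b ≠ 1) (hc : c ≠ 1)
    (he : ∀ n : ℕ, (n : ℝ) ≠ -e) (hz0 : z ≠ 0) (hz : |z| < 1 / 2) :
    threeF2OneTwo b c e (z / (z - 1)) =
      (1 - z) ^ b * ((c - e) / (c - 1)) * threeF2OneTwo b (e - c + 1) e z +
        (e - 1) * (1 - z) * (1 - (1 - z) ^ (b - 1)) / ((c - 1) * (b - 1) * z) := by
  have h1z : 1 - z ≠ 0 := by linarith [le_abs_self z]
  by_cases he1 : e = 1
  · subst he1
    rw [threeF2OneTwo_one, threeF2OneTwo_one, show (1 : ℝ) - c + 1 = 2 - c by ring,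
      ordinaryHypergeometric_pfaff b c (fun n h => by linarith [n.cast_nonneg (α := ℝ)]) hz,
      div_self (sub_ne_zero.2 hc)]
    simp
  have he' : ∀ n : ℕ, (n : ℝ) ≠ -(e - 1) := by
    rintro (_ | n) h
    · exact he1 (by norm_num at h; linarith)
    · exact he n (by push_cast at h; linarith)
  have key := ordinaryHypergeometric_pfaff (b - 1) (c - 1) he' hz
  rw [ordinaryHypergeometric_eq_one_add _ _ he' (abs_div_sub_one_lt_one hz),
    ordinaryHypergeometric_eq_one_add _ _ he' (by linarith),
    show e - 1 - (c - 1) = e - c by ring, rpow_sub_one h1z] at key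
  simp only [sub_add_cancel] at key
  rw [rpow_sub_one h1z]
  generalize threeF2OneTwo b c e (z / (z - 1)) = S at key ⊢
  generalize threeF2OneTwo b (e - c + 1) e z = T at key ⊢
  generalize (1 - z) ^ b = P at key ⊢
  have : z - 1 ≠ 0 := by linarith [le_abs_self z]
  field_simp at key ⊢
  apply mul_left_cancel₀ h1z
  linear_combination key

/-- the transformation of `₃F₂(1,b,c;2,e;z/(z-1))`. -/
theorem threeF2_transformation (b c e z : ℝ) (hb : b ≠ 1) (hc : c ≠ 1) (he : 0 < e)
    (hz0 : 0 < z) (hz : z < 1/2) :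
    ∑' k : ℕ, poch b k * poch c k / ((Nat.factorial (k + 1) : ℝ) * poch e k) *
        (z / (z - 1)) ^ k =
      (1 - z) ^ b * ((c - e) / (c - 1)) *
        ∑' k : ℕ, poch b k * poch (e - c + 1) k * z ^ k /
          ((Nat.factorial (k + 1) : ℝ) * poch e k) +
      (e - 1) * (1 - z) * (1 - (1 - z) ^ (b - 1)) / ((c - 1) * (b - 1) * z) := by
  have he' : ∀ n : ℕ, (n : ℝ) ≠ -e := fun n h => by linarith [n.cast_nonneg (α := ℝ)]
  simpa only [threeF2OneTwo, mul_div_right_comm _ (z ^ _)] using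
    threeF2OneTwo_transformation hb hc he' hz0.ne' (by rwa [abs_of_pos hz0])
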